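/- Every well-ordering of L can be coded into an accessible configuration of the edged cube Q̄_L: there is an injective map assigning to each well-ordering ≺ of L a configuration f_≺ of Q̄_L accessible from the solved configuration f_solved, with distinct well-orderings receiving distinct configurations. In particular, if |L| = ℵ_α, there is an injection from the ordinal interval [ω_α, ω_{α+1}) into the set of accessible configurations of Q̄_L. -/

import Mathlib

universe u v

namespace InfRubik

/-- The three axes of the cube. -/
inductive Axis : Type
  | x | y | z
  deriving DecidableEq

/-- The six colors of the Rubik's cube.  A *configuration* is a map from cells to
`Option Color`, where `none` plays the role of the non-color `NaC`. -/
inductive Color : Type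
  | red | white | green | orange | yellow | blue
  deriving DecidableEq

/-- The set `L̄† = -L ∪ {0} ∪ L ∪ {±∞}` of extended coordinates. -/
inductive ExtCoord (L : Type u) : Type u
  | neg : L → ExtCoord L
  | zero : ExtCoord L
  | pos : L → ExtCoord L
  | negInf : ExtCoord L
  | posInf : ExtCoord L

namespace ExtCoord

variable {L : Type u}

/-- The reflection `r ↦ -r`. -/
def reflect : ExtCoord L → ExtCoord L
  | .neg r => .pos r
  | .zero => .zero
  | .pos r => .neg r
  | .negInf => .posInf
  | .posInf => .negInf

@[simp] theorem reflect_reflect (a : ExtCoord L) : a.reflect.reflect = a := by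
  cases a <;> rfl

/-- Whether a coordinate is `±∞`. -/
def isInfB : ExtCoord L → Bool
  | .negInf => true
  | .posInf => true
  | _ => false

@[simp] theorem isInfB_reflect (a : ExtCoord L) : a.reflect.isInfB = a.isInfB := by
  cases a <;> rfl

/-- Whether a coordinate is `0`. -/
def isZeroB : ExtCoord L → Bool
  | .zero => true
  | _ => false

@[simp] theorem isZeroB_reflect (a : ExtCoord L) : a.reflect.isZeroB = a.isZeroB := by
  cases a <;> rfl

end ExtCoord

/-- A point of the ambient space `L̄† × L̄† × L̄†`. -/
abbrev Triple (L : Type u) := ExtCoord L × ExtCoord L × ExtCoord L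

/-- The coordinate of a point along an axis. -/
def Triple.coord {L : Type u} : Axis → Triple L → ExtCoord L
  | .x, p => p.1
  | .y, p => p.2.1
  | .z, p => p.2.2

/-- Quarter-turn rotation of the ambient space about an axis (right-hand rule). -/
def rot {L : Type u} : Axis → Triple L → Triple L
  | .x, p => (p.1, p.2.2.reflect, p.2.1)
  | .y, p => (p.2.2, p.2.1, p.1.reflect)
  | .z, p => (p.2.1.reflect, p.1, p.2.2)

/-- Inverse quarter-turn rotation of the ambient space about an axis. -/
def rotInv {L : Type u} : Axis → Triple L → Triple L
  | .x, p => (p.1, p.2.2, p.2.1.reflect)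
  | .y, p => (p.2.2.reflect, p.2.1, p.1)
  | .z, p => (p.2.1, p.1.reflect, p.2.2)

@[simp] theorem rotInv_rot {L : Type u} (i : Axis) (p : Triple L) : rotInv i (rot i p) = p := by
  cases i <;> simp [rot, rotInv]

@[simp] theorem rot_rotInv {L : Type u} (i : Axis) (p : Triple L) : rot i (rotInv i p) = p := by
  cases i <;> simp [rot, rotInv]

/-- The number of infinite coordinates of a point. -/
def infCount {L : Type u} (p : Triple L) : ℕ :=
  (if p.1.isInfB then 1 else 0) + (if p.2.1.isInfB then 1 else 0) +
    (if p.2.2.isInfB then 1 else 0)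

/-- The number of zero coordinates of a point. -/
def zeroCount {L : Type u} (p : Triple L) : ℕ :=
  (if p.1.isZeroB then 1 else 0) + (if p.2.1.isZeroB then 1 else 0) +
    (if p.2.2.isZeroB then 1 else 0)

theorem infCount_rot {L : Type u} (i : Axis) (p : Triple L) : infCount (rot i p) = infCount p := by
  cases i <;> cases h1 : p.1.isInfB <;> cases h2 : p.2.1.isInfB <;> cases h3 : p.2.2.isInfB <;>
    simp [rot, infCount, h1, h2, h3]

theorem infCount_rotInv {L : Type u} (i : Axis) (p : Triple L) :
    infCount (rotInv i p) = infCount p := by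
  cases i <;> cases h1 : p.1.isInfB <;> cases h2 : p.2.1.isInfB <;> cases h3 : p.2.2.isInfB <;>
    simp [rotInv, infCount, h1, h2, h3]

@[simp] theorem coord_rot_self {L : Type u} (i : Axis) (p : Triple L) :
    (rot i p).coord i = p.coord i := by
  cases i <;> rfl

@[simp] theorem coord_rotInv_self {L : Type u} (i : Axis) (p : Triple L) :
    (rotInv i p).coord i = p.coord i := by
  cases i <;> rfl

/-- A cell of the *edgeless* cube `Q_L`: a point of the ambient space with exactly one
infinite coordinate. -/
def Cell (L : Type u) : Type u := {p : Triple L // infCount p = 1}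

open Classical in
/-- The underlying map on points of the quarter-turn twist `T_{i,α}`. -/
noncomputable def qtTriple {L : Type u} (i : Axis) (α : ExtCoord L) (p : Triple L) : Triple L :=
  if p.coord i = α then rot i p else p

open Classical in
/-- The underlying map on points of the inverse quarter-turn twist `T_{i,α}⁻¹`. -/
noncomputable def qtTripleInv {L : Type u} (i : Axis) (α : ExtCoord L) (p : Triple L) : Triple L :=
  if p.coord i = α then rotInv i p else p

theorem qtTripleInv_qtTriple {L : Type u} (i : Axis) (α : ExtCoord L) (p : Triple L) :
    qtTripleInv i α (qtTriple i α p) = p := by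
  classical
  by_cases h : p.coord i = α <;> simp [qtTriple, qtTripleInv, h]

theorem qtTriple_qtTripleInv {L : Type u} (i : Axis) (α : ExtCoord L) (p : Triple L) :
    qtTriple i α (qtTripleInv i α p) = p := by
  classical
  by_cases h : p.coord i = α <;> simp [qtTriple, qtTripleInv, h]

theorem infCount_qtTriple {L : Type u} (i : Axis) (α : ExtCoord L) (p : Triple L) :
    infCount (qtTriple i α p) = infCount p := by
  classical
  by_cases h : p.coord i = α <;> simp [qtTriple, h, infCount_rot]

theorem infCount_qtTripleInv {L : Type u} (i : Axis) (α : ExtCoord L) (p : Triple L) :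
    infCount (qtTripleInv i α p) = infCount p := by
  classical
  by_cases h : p.coord i = α <;> simp [qtTripleInv, h, infCount_rotInv]

/-- The quarter-turn twist `T_{i,α}` of the edgeless cube, as a permutation of cells. -/
noncomputable def quarterTurn {L : Type u} (i : Axis) (α : ExtCoord L) : Equiv.Perm (Cell L) where
  toFun c := ⟨qtTriple i α c.1, by rw [infCount_qtTriple]; exact c.2⟩
  invFun c := ⟨qtTripleInv i α c.1, by rw [infCount_qtTripleInv]; exact c.2⟩
  left_inv c := Subtype.ext (qtTripleInv_qtTriple i α c.1)
  right_inv c := Subtype.ext (qtTriple_qtTripleInv i α c.1)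

/-- The basic twists of the edgeless cube: quarter turns, half turns and reverse
quarter turns of a single layer. -/
def IsBasic (L : Type u) (π : Equiv.Perm (Cell L)) : Prop :=
  ∃ (i : Axis) (α : ExtCoord L),
    π = quarterTurn i α ∨ π = quarterTurn i α ^ 2 ∨ π = (quarterTurn i α)⁻¹

/-! ### The edged cube -/

/-- How a quarter-turn about axis `i` transports the face tag of a cell. -/
def tagMap : Axis → Axis → Axis
  | .x, .x => .x
  | .x, .y => .z
  | .x, .z => .y
  | .y, .x => .z
  | .y, .y => .y
  | .y, .z => .x
  | .z, .x => .y
  | .z, .y => .x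
  | .z, .z => .z

@[simp] theorem tagMap_tagMap (i j : Axis) : tagMap i (tagMap i j) = j := by
  cases i <;> cases j <;> rfl

theorem isInfB_coord_tagMap_rot {L : Type u} (i j : Axis) (p : Triple L) :
    ((rot i p).coord (tagMap i j)).isInfB = (p.coord j).isInfB := by
  cases i <;> cases j <;> simp [rot, Triple.coord, tagMap]

theorem isInfB_coord_tagMap_rotInv {L : Type u} (i j : Axis) (p : Triple L) :
    ((rotInv i p).coord (tagMap i j)).isInfB = (p.coord j).isInfB := by
  cases i <;> cases j <;> simp [rotInv, Triple.coord, tagMap]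

/-- A cell of the *edged* cube `Q̄_L`: a point of the ambient space together with a tag
naming an axis, such that the coordinate along the tagged axis is infinite (the tag
indicates the face to which the cell belongs). -/
def ECell (L : Type u) : Type u := {q : Triple L × Axis // (q.1.coord q.2).isInfB = true}

open Classical in
/-- The underlying map of the quarter-turn twist `T_{i,α}` of the edged cube. -/
noncomputable def eqtFun {L : Type u} (i : Axis) (α : ExtCoord L) (q : Triple L × Axis) :
    Triple L × Axis :=
  if q.1.coord i = α then (rot i q.1, tagMap i q.2) else q

open Classical in
/-- The underlying map of the reverse quarter-turn twist of the edged cube. -/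
noncomputable def eqtFunInv {L : Type u} (i : Axis) (α : ExtCoord L) (q : Triple L × Axis) :
    Triple L × Axis :=
  if q.1.coord i = α then (rotInv i q.1, tagMap i q.2) else q

theorem eqtFunInv_eqtFun {L : Type u} (i : Axis) (α : ExtCoord L) (q : Triple L × Axis) :
    eqtFunInv i α (eqtFun i α q) = q := by
  classical
  by_cases h : q.1.coord i = α <;> simp [eqtFun, eqtFunInv, h]

theorem eqtFun_eqtFunInv {L : Type u} (i : Axis) (α : ExtCoord L) (q : Triple L × Axis) :
    eqtFun i α (eqtFunInv i α q) = q := by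
  classical
  by_cases h : q.1.coord i = α <;> simp [eqtFun, eqtFunInv, h]

theorem isInfB_eqtFun {L : Type u} (i : Axis) (α : ExtCoord L) (q : Triple L × Axis) :
    (((eqtFun i α q).1.coord (eqtFun i α q).2)).isInfB = ((q.1.coord q.2)).isInfB := by
  classical
  by_cases h : q.1.coord i = α <;> simp [eqtFun, h, isInfB_coord_tagMap_rot]

theorem isInfB_eqtFunInv {L : Type u} (i : Axis) (α : ExtCoord L) (q : Triple L × Axis) :
    (((eqtFunInv i α q).1.coord (eqtFunInv i α q).2)).isInfB = ((q.1.coord q.2)).isInfB := by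
  classical
  by_cases h : q.1.coord i = α <;> simp [eqtFunInv, h, isInfB_coord_tagMap_rotInv]

/-- The quarter-turn twist `T_{i,α}` of the edged cube, as a permutation of cells.  A face
twist moves, besides the cells of its face, also the coupled edge and corner cells of the
adjacent faces lying in the twisted layer. -/
noncomputable def equarterTurn {L : Type u} (i : Axis) (α : ExtCoord L) :
    Equiv.Perm (ECell L) where
  toFun c := ⟨eqtFun i α c.1, by rw [isInfB_eqtFun]; exact c.2⟩
  invFun c := ⟨eqtFunInv i α c.1, by rw [isInfB_eqtFunInv]; exact c.2⟩
  left_inv c := Subtype.ext (eqtFunInv_eqtFun i α c.1)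
  right_inv c := Subtype.ext (eqtFun_eqtFunInv i α c.1)

/-- The basic twists of the edged cube. -/
def IsEBasic (L : Type u) (π : Equiv.Perm (ECell L)) : Prop :=
  ∃ (i : Axis) (α : ExtCoord L),
    π = equarterTurn i α ∨ π = equarterTurn i α ^ 2 ∨ π = (equarterTurn i α)⁻¹

/-! ### Transfinite sequences of twists and their action on labellings -/

open Classical in
/-- The eventual value of an ordinal-indexed family of `Option`-values: `some v` if the family
stabilizes on `some v` before `lam`, and `none` otherwise. -/
noncomputable def eventualVal {X : Type u} (lam : Ordinal.{v})
    (g : ∀ η, η < lam → Option X) : Option X :=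
  if h : ∃ v : X, ∃ γ, γ < lam ∧ ∀ η (hη : η < lam), γ ≤ η → g η hη = some v
  then some h.choose else none

/-- Applying an ordinal-indexed sequence of permutations to an initial labelling:
`run σ f0 θ` is the labelling obtained after the first `θ` moves, with
`f_{η+1}(c) = f_η(σ_η⁻¹ c)` at successors and the eventual value (or `NaC = none`)
at limits. -/
noncomputable def run {Cl : Type v} {X : Type u} (σ : Ordinal.{v} → Equiv.Perm Cl)
    (f0 : Cl → Option X) (θ : Ordinal.{v}) : Cl → Option X :=
  Ordinal.limitRecOn (motive := fun _ => Cl → Option X) θ f0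
    (fun η fη c => fη ((σ η)⁻¹ c))
    (fun lam _ prev c => eventualVal lam (fun η h => prev η h c))

/-- A (transfinite) sequence of twists of length `len`, each of which satisfies the
predicate `B` (being a basic twist). -/
structure TwistSeq (Cl : Type v) (B : Equiv.Perm Cl → Prop) : Type (v + 1) where
  len : Ordinal.{v}
  seq : Ordinal.{v} → Equiv.Perm Cl
  basic : ∀ η, η < len → B (seq η)

namespace TwistSeq

variable {Cl : Type v} {B : Equiv.Perm Cl → Prop}

/-- The terminal labelling obtained by applying a sequence of twists to `f0`. -/
noncomputable def terminal (s : TwistSeq Cl B) {X : Type u} (f0 : Cl → Option X) :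
    Cl → Option X :=
  run s.seq f0 s.len

/-- A sequence of twists is convergent over `f0` if the terminal labelling is legal,
i.e. never takes the value `NaC = none`. -/
def ConvOver (s : TwistSeq Cl B) {X : Type u} (f0 : Cl → Option X) : Prop :=
  ∀ c, s.terminal f0 c ≠ none

/-- A sequence of twists is universally convergent if it is convergent over the identity
labelling. -/
def UnivConv (s : TwistSeq Cl B) : Prop := s.ConvOver (fun c => some c)

/-- A sequence is twist-finite if each twist occurs in it only finitely many times. -/
def TwistFinite (s : TwistSeq Cl B) : Prop :=
  ∀ π : Equiv.Perm Cl, {η : Ordinal | η < s.len ∧ s.seq η = π}.Finite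

/-- Two sequences are equivalent, `σ⃗ ∼ τ⃗`, when they produce the same terminal
configuration over every initial configuration. -/
def Sim (s t : TwistSeq Cl B) : Prop :=
  ∀ f : Cl → Option Color, s.terminal f = t.terminal f

/-- Concatenation of twist sequences: `s.concat t` performs `s` and then `t`. -/
noncomputable def concat (s t : TwistSeq Cl B) : TwistSeq Cl B where
  len := s.len + t.len
  seq := fun η => if η < s.len then s.seq η else t.seq (η - s.len)
  basic := by
    intro η hη
    by_cases h : η < s.len
    · simpa [h] using s.basic η h
    · have hc : 0 < t.len := by
        rcases eq_zero_or_pos t.len with h0 | h0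
        · rw [h0, add_zero] at hη; exact absurd hη h
        · exact h0
      have h2 : η - s.len < t.len := Ordinal.sub_lt_of_lt_add hη hc
      simpa [h] using t.basic _ h2

/-- The empty sequence of twists. -/
def empty (Cl : Type v) (B : Equiv.Perm Cl → Prop) : TwistSeq Cl B where
  len := 0
  seq := fun _ => 1
  basic := fun η hη => absurd hη (by simp)

/-- `n`-fold self-concatenation of a sequence of twists. -/
noncomputable def npow (s : TwistSeq Cl B) : ℕ → TwistSeq Cl B
  | 0 => empty Cl B
  | n + 1 => (npow s n).concat s

end TwistSeq

/-- Basic sequences of twists of the edgeless cube `Q_L`. -/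
abbrev BasicSeq (L : Type u) := TwistSeq (Cell L) (IsBasic L)

/-- Basic sequences of twists of the edged cube `Q̄_L`. -/
abbrev EBasicSeq (L : Type u) := TwistSeq (ECell L) (IsEBasic L)

/-- `f` is accessible from `f0` when some basic sequence applied to `f0` is convergent with
terminal configuration `f`. -/
def Accessible {Cl : Type v} (B : Equiv.Perm Cl → Prop) (f0 f : Cl → Option Color) : Prop :=
  ∃ s : TwistSeq Cl B, s.ConvOver f0 ∧ s.terminal f0 = f

/-- A labelling is legal if it never takes the value `NaC = none`. -/
def IsLegal {Cl : Type v} {X : Type u} (f : Cl → Option X) : Prop := ∀ c, f c ≠ none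

/-! ### Clusters, faces, and distinguished configurations -/

/-- The group of permutations of cells of the edgeless cube generated by the basic twists. -/
def twistGroup (L : Type u) : Subgroup (Equiv.Perm (Cell L)) :=
  Subgroup.closure {π | IsBasic L π}

/-- The cluster of a cell of the edgeless cube: its orbit under the group generated by the
basic twists. -/
def cluster {L : Type u} (c : Cell L) : Set (Cell L) :=
  {d | ∃ g ∈ twistGroup L, g c = d}

/-- The group of permutations of cells of the edged cube generated by the basic twists. -/
def etwistGroup (L : Type u) : Subgroup (Equiv.Perm (ECell L)) :=
  Subgroup.closure {π | IsEBasic L π}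

/-- The cluster of a cell of the edged cube. -/
def ecluster {L : Type u} (c : ECell L) : Set (ECell L) :=
  {d | ∃ g ∈ etwistGroup L, g c = d}

open Classical in
/-- The solved configuration of the edgeless cube: each face gets one of six distinct
colors. -/
noncomputable def fSolved (L : Type u) : Cell L → Option Color := fun c =>
  if c.1.1 = ExtCoord.posInf then some .red
  else if c.1.1 = ExtCoord.negInf then some .orange
  else if c.1.2.1 = ExtCoord.posInf then some .blue
  else if c.1.2.1 = ExtCoord.negInf then some .green
  else if c.1.2.2 = ExtCoord.posInf then some .white
  else some .yellow

/-- The color of each face: the face is named by the axis and the sign (`true` = `+∞`). -/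
def faceColor : Axis → Bool → Color
  | .x, true => .red
  | .x, false => .orange
  | .y, true => .blue
  | .y, false => .green
  | .z, true => .white
  | .z, false => .yellow

open Classical in
/-- The solved configuration of the edged cube. -/
noncomputable def efSolved (L : Type u) : ECell L → Option Color := fun c =>
  if c.1.1.coord c.1.2 = ExtCoord.posInf then some (faceColor c.1.2 true)
  else some (faceColor c.1.2 false)

/-- A center cell of the edgeless cube: two of its coordinates are `0`. -/
def IsCenter {L : Type u} (c : Cell L) : Prop := zeroCount c.1 = 2

/-- The global rotation of the whole cube about an axis, as a permutation of the cells of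
the edgeless cube. -/
def rotAllPerm {L : Type u} (i : Axis) : Equiv.Perm (Cell L) where
  toFun c := ⟨rot i c.1, by rw [infCount_rot]; exact c.2⟩
  invFun c := ⟨rotInv i c.1, by rw [infCount_rotInv]; exact c.2⟩
  left_inv c := Subtype.ext (rotInv_rot i c.1)
  right_inv c := Subtype.ext (rot_rotInv i c.1)

/-- The group of global rotations of the edgeless cube. -/
def rotGroup (L : Type u) : Subgroup (Equiv.Perm (Cell L)) :=
  Subgroup.closure (Set.range (rotAllPerm (L := L)))

/-- A configuration of the edgeless cube is standard if every non-center cluster contains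
exactly four cells of each of the six colors, and its restriction to the center cluster is
obtained from the solved configuration by a global rotation of the cube. -/
def Standard {L : Type u} (f : Cell L → Option Color) : Prop :=
  (∀ c : Cell L, ¬IsCenter c → ∀ γ : Color, {d ∈ cluster c | f d = some γ}.ncard = 4) ∧
  ∃ g ∈ rotGroup L, ∀ d : Cell L, IsCenter d → f d = fSolved L (g⁻¹ d)

/-- A configuration is invariant under all quarter-turn face twists. -/
def FaceInvariant {L : Type u} (f : Cell L → Option Color) : Prop :=
  ∀ (i : Axis) (α : ExtCoord L), α.isInfB = true →
    ∀ c : Cell L, f ((quarterTurn i α)⁻¹ c) = f c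

/-! ### Quadrants and cluster configurations -/

/-- The upper-right quadrant `D` of the Front face: the cells `(x, y, +∞)` with `x ∈ L`
and `y ∈ {0} ∪ L`; every non-center cluster has a unique representative in `D`. -/
def Dset (L : Type u) : Set (Cell L) :=
  {c | ∃ (a : L) (b : ExtCoord L), (b = ExtCoord.zero ∨ ∃ r : L, b = ExtCoord.pos r) ∧
    c.1 = (ExtCoord.pos a, b, ExtCoord.posInf)}

/-- Two cells lie in the same face quadrant (an image of `D` under a global rotation). -/
def SameQuadrant {L : Type u} (d d' : Cell L) : Prop :=
  ∃ g ∈ rotGroup L, d ∈ (fun c => g c) '' Dset L ∧ d' ∈ (fun c => g c) '' Dset L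

/-! ### Coupled cells of the edged cube -/

/-- Two cells of the edged cube are coupled if they occupy the same location but belong to
different faces (they are parts of a common edge or corner cubie). -/
def Coupled {L : Type u} (c c' : ECell L) : Prop := c.1.1 = c'.1.1 ∧ c.1.2 ≠ c'.1.2

/-- An edge cell: exactly two infinite coordinates. -/
def IsEdgeCell {L : Type u} (c : ECell L) : Prop := infCount c.1.1 = 2

/-- A corner cell: three infinite coordinates. -/
def IsCornerCell {L : Type u} (c : ECell L) : Prop := infCount c.1.1 = 3

/-- An edge-cross cell: an edge cell one of whose coordinates is `0`. -/
def IsEdgeCross {L : Type u} (c : ECell L) : Prop :=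
  IsEdgeCell c ∧ 0 < zeroCount c.1.1

end InfRubik

/-!
A subset `S ⊆ L` is coded by a transfinite sequence of quarter turns about the `x`-axis: along
an enumeration of `L`, turn the layer `x = a` if `a ∈ S` and the layer `x = -a` otherwise.
These layers are pairwise distinct and a turn preserves the layer of every cell, so each cell
is moved at most once; hence the sequence converges over the solved configuration, and the
cell `(r, +∞, 0)` of the face `y = +∞` ends up yellow if `r ∈ S` and stays blue otherwise.
So sets are coded injectively, and it remains to embed both families into `Set L`: an infinite
`L` carries at most `2^|L|` relations, and `ℵ_{α+1} ≤ 2^{ℵ_α}` by Cantor's theorem.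
-/

namespace InfRubik

section Run

variable {Cl : Type v} {X : Type u}

theorem eventualVal_eq_of_forall_ge {lam γ : Ordinal.{v}} {g : ∀ η, η < lam → Option X}
    {x : Option X} (hγ : γ < lam) (h : ∀ η (hη : η < lam), γ ≤ η → g η hη = x) :
    eventualVal lam g = x := by
  classical
  unfold eventualVal
  split_ifs with hex
  · obtain ⟨γ', hγ', h'⟩ := hex.choose_spec
    have hmax : max γ γ' < lam := max_lt hγ hγ'
    rw [← h' _ hmax (le_max_right _ _), h _ hmax (le_max_left _ _)]
  · cases x with
    | none => rfl
    | some v => exact absurd ⟨v, γ, hγ, h⟩ hex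

theorem run_zero (σ : Ordinal.{v} → Equiv.Perm Cl) (f0 : Cl → Option X) : run σ f0 0 = f0 :=
  Ordinal.limitRecOn_zero _ _ _

theorem run_add_one_apply (σ : Ordinal.{v} → Equiv.Perm Cl) (f0 : Cl → Option X)
    (η : Ordinal.{v}) (c : Cl) : run σ f0 (η + 1) c = run σ f0 η ((σ η)⁻¹ c) :=
  congrFun (Ordinal.limitRecOn_add_one (motive := fun _ => Cl → Option X) _ _ _ _) c

theorem run_apply_of_isSuccLimit (σ : Ordinal.{v} → Equiv.Perm Cl) (f0 : Cl → Option X)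
    {lam : Ordinal.{v}} (h : Order.IsSuccLimit lam) (c : Cl) :
    run σ f0 lam c = eventualVal lam (fun η _ => run σ f0 η c) :=
  congrFun (Ordinal.limitRecOn_limit (motive := fun _ => Cl → Option X) _ _ _ _ h) c

variable {Λ : Type*} (layer : Cl → Λ) (σ : Ordinal.{v} → Equiv.Perm Cl)
  (ℓ : Ordinal.{v} → Λ)

theorem run_apply_layerwise (hfix : ∀ η c, layer c ≠ ℓ η → σ η c = c)
    (hlayer : ∀ η c, layer (σ η c) = layer c) (f0 : Cl → Option X) (θ : Ordinal.{v})
    (hℓ : Set.InjOn ℓ (Set.Iio θ)) (c : Cl) :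
    (∀ η < θ, layer c = ℓ η → run σ f0 θ c = f0 ((σ η)⁻¹ c)) ∧
      ((∀ η < θ, layer c ≠ ℓ η) → run σ f0 θ c = f0 c) := by
  have hfix_inv : ∀ η c, layer c ≠ ℓ η → (σ η)⁻¹ c = c := fun η c h =>
    (Equiv.Perm.inv_eq_iff_eq).mpr (hfix η c h).symm
  have hlayer_inv : ∀ η c, layer ((σ η)⁻¹ c) = layer c := fun η c => by
    simpa using (hlayer η ((σ η)⁻¹ c)).symm
  induction θ using Ordinal.limitRecOn generalizing c with
  | zero => simp [run_zero]
  | add_one η IH =>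
    have hη : η < η + 1 := Order.lt_add_one_iff.mpr le_rfl
    have hℓη : Set.InjOn ℓ (Set.Iio η) := hℓ.mono (Set.Iio_subset_Iio hη.le)
    have hne : ∀ η' < η, layer c = ℓ η' → layer c ≠ ℓ η := fun η' hη' h h' =>
      hη'.ne (hℓ (lt_trans hη' hη) hη (h.symm.trans h'))
    rw [run_add_one_apply]
    refine ⟨fun η' hη' hc => ?_, fun hc => ?_⟩
    · rcases (Order.lt_add_one_iff.mp hη').lt_or_eq with hlt | rfl
      · rw [hfix_inv η c (hne η' hlt hc), (IH hℓη c).1 η' hlt hc]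
      · refine (IH hℓη _).2 fun η'' hη'' h => ?_
        exact hne η'' hη'' (by rwa [hlayer_inv] at h) (hlayer_inv η' c ▸ hc)
    · rw [hfix_inv η c (hc η hη)]
      exact (IH hℓη c).2 fun η' hη' => hc η' (lt_trans hη' hη)
  | limit lam hlam IH =>
    have hℓη : ∀ η < lam, Set.InjOn ℓ (Set.Iio η) := fun η hη =>
      hℓ.mono (Set.Iio_subset_Iio hη.le)
    rw [run_apply_of_isSuccLimit σ f0 hlam]
    refine ⟨fun η₀ hη₀ hc => ?_, fun hc => ?_⟩
    · refine eventualVal_eq_of_forall_ge (hlam.add_one_lt hη₀) fun η hη hge => ?_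
      exact (IH η hη (hℓη η hη) c).1 η₀ (Order.add_one_le_iff.mp hge) hc
    · refine eventualVal_eq_of_forall_ge hlam.bot_lt fun η hη _ => ?_
      exact (IH η hη (hℓη η hη) c).2 fun η' hη' => hc η' (lt_trans hη' hη)

end Run

section Coding

variable {L : Type u}

theorem coord_equarterTurn_apply (i : Axis) (a : ExtCoord L) (c : ECell L) :
    (equarterTurn i a c).1.1.coord i = c.1.1.coord i := by
  classical
  change (eqtFun i a c.1).1.coord i = _
  unfold eqtFun
  split_ifs <;> simp

theorem equarterTurn_apply_of_coord_ne {i : Axis} {a : ExtCoord L} {c : ECell L}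
    (h : c.1.1.coord i ≠ a) : equarterTurn i a c = c := by
  classical
  exact Subtype.ext (if_neg h)

noncomputable def layerTwists (i : Axis) (ℓ : Ordinal.{u} → ExtCoord L) (θ : Ordinal.{u}) :
    EBasicSeq L where
  len := θ
  seq η := equarterTurn i (ℓ η)
  basic η _ := ⟨i, ℓ η, Or.inl rfl⟩

variable {i : Axis} {ℓ : Ordinal.{u} → ExtCoord L} {θ : Ordinal.{u}}

theorem layerTwists_terminal_apply (hℓ : Set.InjOn ℓ (Set.Iio θ)) {X : Type*}
    (f0 : ECell L → Option X) (c : ECell L) :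
    (∀ η < θ, c.1.1.coord i = ℓ η →
        (layerTwists i ℓ θ).terminal f0 c = f0 ((equarterTurn i (ℓ η))⁻¹ c)) ∧
      ((∀ η < θ, c.1.1.coord i ≠ ℓ η) → (layerTwists i ℓ θ).terminal f0 c = f0 c) :=
  run_apply_layerwise (fun c => c.1.1.coord i) _ ℓ (fun _ _ => equarterTurn_apply_of_coord_ne)
    (fun η => coord_equarterTurn_apply i (ℓ η)) f0 θ hℓ c

theorem layerTwists_convOver (hℓ : Set.InjOn ℓ (Set.Iio θ)) {X : Type*}
    {f0 : ECell L → Option X} (hf0 : IsLegal f0) : (layerTwists i ℓ θ).ConvOver f0 := by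
  intro c
  by_cases hc : ∃ η < θ, c.1.1.coord i = ℓ η
  · obtain ⟨η, hη, hcη⟩ := hc
    rw [(layerTwists_terminal_apply hℓ f0 c).1 η hη hcη]
    exact hf0 _
  · push Not at hc
    rw [(layerTwists_terminal_apply hℓ f0 c).2 hc]
    exact hf0 c

theorem isLegal_efSolved (L : Type u) : IsLegal (efSolved L) := by
  intro c
  unfold efSolved
  split_ifs <;> simp

theorem injOn_invFun_typein (r : L → L → Prop) [IsWellOrder L r] [Nonempty L] :
    Set.InjOn (Function.invFun (Ordinal.typein r)) (Set.Iio (Ordinal.type r)) := by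
  intro η hη η' hη' h
  have := congrArg (Ordinal.typein r) h
  rwa [Function.invFun_eq (Ordinal.typein_surj r hη),
    Function.invFun_eq (Ordinal.typein_surj r hη')] at this

open Classical in
noncomputable def setLayer (S : Set L) (a : L) : ExtCoord L :=
  if a ∈ S then .pos a else .neg a

theorem setLayer_injective (S : Set L) : Function.Injective (setLayer S) := by
  intro a b h
  unfold setLayer at h
  split_ifs at h <;> simpa using h

def testCell (r : L) : ECell L :=
  ⟨((.pos r, .posInf, .zero), .y), rfl⟩

theorem equarterTurn_inv_testCell (r : L) :
    (equarterTurn .x (.pos r))⁻¹ (testCell r) = ⟨((.pos r, .zero, .negInf), .z), rfl⟩ := by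
  classical
  refine Subtype.ext ?_
  change eqtFunInv .x (.pos r) (testCell r).1 = _
  simp [eqtFunInv, testCell, Triple.coord, rotInv, tagMap, ExtCoord.reflect]

variable [Nonempty L]

noncomputable def codingLayers (S : Set L) : Ordinal.{u} → ExtCoord L :=
  setLayer S ∘ Function.invFun (Ordinal.typein (WellOrderingRel (α := L)))

theorem injOn_codingLayers (S : Set L) :
    Set.InjOn (codingLayers S) (Set.Iio (Ordinal.type (WellOrderingRel (α := L)))) :=
  (setLayer_injective S).comp_injOn (injOn_invFun_typein _)

theorem codingLayers_typein {S : Set L} {r : L} (hr : r ∈ S) :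
    codingLayers S (Ordinal.typein WellOrderingRel r) = .pos r := by
  simp [codingLayers, Function.leftInverse_invFun (Ordinal.typein_injective _) r, setLayer, hr]

theorem codingLayers_ne_pos {S : Set L} {r : L} (hr : r ∉ S) (η : Ordinal.{u}) :
    codingLayers S η ≠ .pos r := by
  intro h
  simp only [codingLayers, Function.comp_apply, setLayer] at h
  split_ifs at h with hmem
  exact hr (ExtCoord.pos.inj h ▸ hmem)

noncomputable def codingTwists (S : Set L) : EBasicSeq L :=
  layerTwists .x (codingLayers S) (Ordinal.type (WellOrderingRel (α := L)))

noncomputable def codingConfig (S : Set L) : ECell L → Option Color :=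
  (codingTwists S).terminal (efSolved L)

theorem accessible_codingConfig (S : Set L) :
    Accessible (IsEBasic L) (efSolved L) (codingConfig S) :=
  ⟨codingTwists S, layerTwists_convOver (injOn_codingLayers S) (isLegal_efSolved L), rfl⟩

theorem codingConfig_testCell_of_mem {S : Set L} {r : L} (hr : r ∈ S) :
    codingConfig S (testCell r) = some .yellow := by
  rw [codingConfig, codingTwists, (layerTwists_terminal_apply (i := .x) (injOn_codingLayers S)
    (efSolved L) (testCell r)).1 _ (Ordinal.typein_lt_type _ r) (codingLayers_typein hr).symm,
    codingLayers_typein hr]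
  simp [equarterTurn_inv_testCell, efSolved, Triple.coord, faceColor]

theorem codingConfig_testCell_of_not_mem {S : Set L} {r : L} (hr : r ∉ S) :
    codingConfig S (testCell r) = some .blue := by
  rw [codingConfig, codingTwists, (layerTwists_terminal_apply (i := .x) (injOn_codingLayers S)
    (efSolved L) (testCell r)).2 fun η _ h => codingLayers_ne_pos hr η h.symm]
  simp [efSolved, testCell, Triple.coord, faceColor]

theorem codingConfig_injective : Function.Injective (codingConfig (L := L)) := by
  have hmem : ∀ (S : Set L) (r : L), r ∈ S ↔ codingConfig S (testCell r) = some .yellow := by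
    intro S r
    by_cases hr : r ∈ S
    · simp [hr, codingConfig_testCell_of_mem]
    · simp [hr, codingConfig_testCell_of_not_mem]
  intro S T h
  ext r
  rw [hmem S, hmem T, h]

end Coding

theorem nonempty_wellOrder_embedding_set (L : Type u) [Infinite L] :
    Nonempty ({r : L → L → Prop // IsWellOrder L r} ↪ Set L) := by
  refine Cardinal.le_def _ _ |>.mp <| (Cardinal.mk_subtype_le _).trans (le_of_eq ?_)
  calc Cardinal.mk (L → L → Prop)
      = Cardinal.mk (Set (L × L)) := Cardinal.mk_congr (Equiv.curry L L Prop).symm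
    _ = Cardinal.mk (Set L) := by
      rw [Cardinal.mk_set, Cardinal.mk_set, Cardinal.mk_prod, Cardinal.lift_id,
        Cardinal.mul_eq_self (Cardinal.aleph0_le_mk L)]

theorem nonempty_Iio_ord_succ_embedding_set (L : Type u) :
    Nonempty (Set.Iio (Order.succ (Cardinal.mk L)).ord ↪ Set L) := by
  refine Cardinal.lift_mk_le'.mp ?_
  rw [Cardinal.mk_Iio_ordinal, Cardinal.card_ord, Cardinal.mk_set, Cardinal.lift_lift,
    Cardinal.lift_le]
  exact Order.succ_le_of_lt (Cardinal.cantor _)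

end InfRubik

open InfRubik in
/-- Every well-ordering of `L` can be coded into an accessible configuration of the edged
cube `Q̄_L`, injectively; in particular, if `|L| = ℵ_α`, there is an injection from the
ordinal interval `[ω_α, ω_{α+1})` into the accessible configurations of `Q̄_L`. -/
theorem coding_well_orders {L : Type u} [Infinite L] (α : Ordinal.{u})
    (hL : Cardinal.mk L = Cardinal.aleph α) :
    (∃ F : {r : L → L → Prop // IsWellOrder L r} → (ECell L → Option Color),
      Function.Injective F ∧
      ∀ r, Accessible (IsEBasic L) (efSolved L) (F r)) ∧
    (∃ G : Set.Ico (Cardinal.aleph α).ord (Cardinal.aleph (α + 1)).ord →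
        (ECell L → Option Color),
      Function.Injective G ∧
      ∀ o, Accessible (IsEBasic L) (efSolved L) (G o)) := by
  obtain ⟨e⟩ := nonempty_wellOrder_embedding_set L
  obtain ⟨e'⟩ := nonempty_Iio_ord_succ_embedding_set L
  rw [hL, Cardinal.succ_aleph] at e'
  exact ⟨⟨codingConfig ∘ e, codingConfig_injective.comp e.injective,
      fun _ => accessible_codingConfig _⟩,
    ⟨codingConfig ∘ e' ∘ Set.inclusion Set.Ico_subset_Iio_self,
      codingConfig_injective.comp (e'.injective.comp (Set.inclusion_injective _)),
      fun _ => accessible_codingConfig _⟩⟩
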